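/- arXiv:math/9908024 — 2 statements merged into one kernel-verified Lean document; each statement's English description precedes it below -/
import Mathlib

section
/- Let n be a positive integer and a a nonzero integer. Then there exist integers x_1, ..., x_n such that x_1 · x_2^2 · x_3^3 ⋯ x_n^n = a, and for every prime p: ord_p(x_n) = ⌊ord_p(a)/n⌋, ord_p(x_i) = 1 if 1 ≤ i ≤ n−1 and i = ord_p(a) − n⌊ord_p(a)/n⌋, and ord_p(x_i) = 0 otherwise. -/
/-!
Write `m = |a| = ∏ p ^ v_p` and divide each exponent by `n`: `v_p = n ⌊v_p / n⌋ + r_p`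
with `0 ≤ r_p < n`. Put `p ^ ⌊v_p / n⌋` into `x_n` and, when `r_p ≠ 0`, one factor `p` into
`x_{r_p}`; then `∏ x_i ^ i` has exponent `n ⌊v_p / n⌋ + r_p = v_p` at every `p`, and the sign of
`a` goes into `x_1`.
-/

open Finset

def canonicalExponent (n i k : ℕ) : ℕ :=
  if i = n then k / n else if i = k % n then 1 else 0

lemma canonicalExponent_zero {n i : ℕ} (hi : i ≠ 0) : canonicalExponent n i 0 = 0 := by
  simp [canonicalExponent, hi]

lemma sum_Icc_mul_canonicalExponent {n : ℕ} (hn : 0 < n) (k : ℕ) :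
    ∑ i ∈ Icc 1 n, i * canonicalExponent n i k = k := by
  have hIcc : Icc 1 n = insert n (Icc 1 (n - 1)) := by
    ext i; simp only [mem_insert, mem_Icc]; omega
  have hrest : ∑ i ∈ Icc 1 (n - 1), i * canonicalExponent n i k = k % n := by
    have hterm : ∀ i ∈ Icc 1 (n - 1), i * canonicalExponent n i k = if i = k % n then i else 0 := by
      intro i hi
      have hin : i ≠ n := by simp only [mem_Icc] at hi; omega
      rw [canonicalExponent, if_neg hin]
      split_ifs <;> simp
    rw [sum_congr rfl hterm, sum_ite_eq']
    split_ifs with hmem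
    · rfl
    · simp only [mem_Icc] at hmem
      have := Nat.mod_lt k hn
      omega
  rw [hIcc, sum_insert (by simp only [mem_Icc]; omega), hrest]
  simp only [canonicalExponent, if_true]
  exact Nat.div_add_mod k n

lemma Nat.factorization_prod_pow_factorization {m : ℕ} {g : ℕ → ℕ} (hg : g 0 = 0) :
    (m.factorization.prod fun p k => p ^ g k).factorization = m.factorization.mapRange g hg := by
  rw [← Finsupp.prod_mapRange_index (fun _ => pow_zero _), Nat.prod_pow_factorization_eq_self]
  intro p hp
  exact Nat.prime_of_mem_primeFactors (Finsupp.support_mapRange hp)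

lemma Nat.prod_prod_pow_factorization_pow_eq_self {m : ℕ} (hm : m ≠ 0) {s : Finset ℕ}
    {g : ℕ → ℕ → ℕ} (hg : ∀ i ∈ s, g i 0 = 0) (hsum : ∀ k, ∑ i ∈ s, i * g i k = k) :
    ∏ i ∈ s, (m.factorization.prod fun p k => p ^ g i k) ^ i = m := by
  have hne : ∀ i ∈ s, (m.factorization.prod fun p k => p ^ g i k) ^ i ≠ 0 := fun i _ =>
    pow_ne_zero _ (prod_ne_zero_iff.mpr fun p hp =>
      pow_ne_zero _ (Nat.prime_of_mem_primeFactors hp).ne_zero)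
  refine Nat.eq_of_factorization_eq (prod_ne_zero_iff.mpr hne) hm fun p => ?_
  rw [Nat.factorization_prod hne, Finsupp.finsetSum_apply, ← hsum (m.factorization p)]
  refine sum_congr rfl fun i hi => ?_
  rw [Nat.factorization_pow, Finsupp.smul_apply, Nat.factorization_prod_pow_factorization (hg i hi),
    Finsupp.mapRange_apply, smul_eq_mul]

noncomputable def canonicalFactor (n i m : ℕ) : ℕ :=
  m.factorization.prod fun p k => p ^ canonicalExponent n i k

lemma prod_Icc_canonicalFactor_pow {n m : ℕ} (hn : 0 < n) (hm : m ≠ 0) :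
    ∏ i ∈ Icc 1 n, canonicalFactor n i m ^ i = m :=
  Nat.prod_prod_pow_factorization_pow_eq_self hm
    (fun i hi => canonicalExponent_zero (by simp only [mem_Icc] at hi; omega))
    (sum_Icc_mul_canonicalExponent hn)

lemma factorization_canonicalFactor {n i m : ℕ} (hi : i ≠ 0) (p : ℕ) :
    (canonicalFactor n i m).factorization p = canonicalExponent n i (m.factorization p) := by
  rw [canonicalFactor, Nat.factorization_prod_pow_factorization (canonicalExponent_zero hi),
    Finsupp.mapRange_apply]

noncomputable def canonicalPart (n : ℕ) (a : ℤ) (i : ℕ) : ℤ :=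
  (if i = 1 then a.sign else 1) * canonicalFactor n i a.natAbs

lemma prod_Icc_canonicalPart_pow {n : ℕ} (hn : 0 < n) {a : ℤ} (ha : a ≠ 0) :
    ∏ i ∈ Icc 1 n, canonicalPart n a i ^ i = a := by
  have h1 : 1 ∈ Icc 1 n := by simp only [mem_Icc]; omega
  simp only [canonicalPart, mul_pow, prod_mul_distrib, ite_pow, one_pow]
  rw [prod_ite_eq' _ _ (a.sign ^ ·), if_pos h1, pow_one]
  have hprod : ∏ i ∈ Icc 1 n, (canonicalFactor n i a.natAbs : ℤ) ^ i = a.natAbs := by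
    exact_mod_cast prod_Icc_canonicalFactor_pow hn (Int.natAbs_ne_zero.mpr ha)
  rw [hprod, Int.sign_mul_natAbs]

lemma padicValInt_canonicalPart {n i : ℕ} (hi : i ≠ 0) {a : ℤ} (ha : a ≠ 0) {p : ℕ}
    (hp : p.Prime) :
    padicValInt p (canonicalPart n a i) = canonicalExponent n i (padicValInt p a) := by
  have habs : (canonicalPart n a i).natAbs = canonicalFactor n i a.natAbs := by
    by_cases h : i = 1 <;> simp [canonicalPart, h, Int.natAbs_mul, Int.natAbs_sign_of_ne_zero ha]
  rw [padicValInt, habs, padicValInt, ← Nat.factorization_def _ hp, ← Nat.factorization_def _ hp,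
    factorization_canonicalFactor hi]

theorem canonical_decomposition_exists (n : ℕ) (hn : 0 < n) (a : ℤ) (ha : a ≠ 0) :
    ∃ x : ℕ → ℤ,
      (∏ i ∈ Finset.Icc 1 n, x i ^ i) = a ∧
      ∀ p : ℕ, p.Prime →
        padicValInt p (x n) = padicValInt p a / n ∧
        ∀ i ∈ Finset.Icc 1 (n - 1),
          padicValInt p (x i) = if i = padicValInt p a % n then 1 else 0 := by
  refine ⟨canonicalPart n a, prod_Icc_canonicalPart_pow hn ha, fun p hp => ⟨?_, fun i hi => ?_⟩⟩
  · rw [padicValInt_canonicalPart hn.ne' ha hp, canonicalExponent, if_pos rfl]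
  · have hi : 1 ≤ i ∧ i ≤ n - 1 := mem_Icc.mp hi
    rw [padicValInt_canonicalPart (by omega) ha hp, canonicalExponent, if_neg (by omega)]
end

section
/- Let a, b, c be nonzero pairwise coprime integers with a + b + c = 0, and let n be a positive integer. Let x_1,...,x_n, y_1,...,y_n, z_1,...,z_n be integers forming the canonical decompositions of a, b, c respectively (i.e., ∏ x_i^i = a with ord_p(x_n) = ⌊ord_p(a)/n⌋, ord_p(x_i) = 1 exactly when i = ord_p(a) − n⌊ord_p(a)/n⌋ and 1 ≤ i ≤ n−1, ord_p(x_i) = 0 otherwise, and similarly for y_i with b and z_i with c). Then |x_1⋯x_n · y_1⋯y_n · z_1⋯z_n| ≤ rad(abc) · |abc|^{1/n}, where rad(m) denotes the radical (product of distinct prime divisors) of m. -/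
open Finset

/-- The radical of a nonzero integer: the product of its distinct prime divisors. -/
def Int.radical' (m : ℤ) : ℕ := ∏ p ∈ m.natAbs.primeFactors, p

/-- `x 1, …, x n` is the canonical decomposition of `a`: `∏ x i ^ i = a`, with
`ord_p (x n) = ⌊ord_p a / n⌋`, `ord_p (x i) = 1` exactly when `i = ord_p a mod n`
(for `1 ≤ i ≤ n - 1`), and `ord_p (x i) = 0` otherwise. -/
def IsCanonicalDecomp (n : ℕ) (a : ℤ) (x : ℕ → ℤ) : Prop :=
  (∀ i ∈ Finset.Icc 1 n, x i ≠ 0) ∧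
  (∏ i ∈ Finset.Icc 1 n, x i ^ i) = a ∧
  ∀ p : ℕ, p.Prime →
    padicValInt p (x n) = padicValInt p a / n ∧
    ∀ i ∈ Finset.Icc 1 (n - 1),
      padicValInt p (x i) = if i = padicValInt p a % n then 1 else 0

/-! If `k = ord_p a`, the canonical decomposition gives `ord_p (x 1 ⋯ x n) = ⌈k / n⌉`, and
`n ⌈k / n⌉ ≤ k + n` when `k > 0`; so `(x 1 ⋯ x n) ^ n` divides `rad(a) ^ n * |a|`. Multiplying
over `a`, `b`, `c`, whose radicals multiply since they are coprime, and taking `n`-th roots gives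
the bound. -/

namespace Int

lemma radical'_pos (m : ℤ) : 0 < radical' m :=
  prod_pos fun _ hp => (Nat.prime_of_mem_primeFactors hp).pos

lemma factorization_radical' (m : ℤ) (p : ℕ) :
    (radical' m).factorization p = if p ∈ m.natAbs.primeFactors then 1 else 0 := by
  rw [radical', Nat.factorization_prod_apply fun q hq => (Nat.prime_of_mem_primeFactors hq).ne_zero,
    sum_congr rfl fun q hq => by
      rw [(Nat.prime_of_mem_primeFactors hq).factorization, Finsupp.single_apply],
    sum_ite_eq']

lemma radical'_mul {a b : ℤ} (h : IsCoprime a b) : radical' (a * b) = radical' a * radical' b := by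
  have h' : Nat.Coprime a.natAbs b.natAbs := isCoprime_iff_gcd_eq_one.mp h
  rw [radical', natAbs_mul, h'.primeFactors_mul, prod_union h'.disjoint_primeFactors]
  rfl

end Int

lemma factorization_natAbs_eq_padicValInt (z : ℤ) {p : ℕ} (hp : p.Prime) :
    z.natAbs.factorization p = padicValInt p z :=
  Nat.factorization_def _ hp

lemma Nat.mul_div_add_ite_le (n k : ℕ) :
    n * (k / n + if k % n = 0 then 0 else 1) ≤ k + if k = 0 then 0 else n := by
  have := Nat.div_add_mod k n
  rw [mul_add]
  split_ifs <;> omega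

lemma le_mul_rpow_one_div_of_pow_le {x y z : ℝ} (hy : 0 ≤ y) (hz : 0 ≤ z) {n : ℕ} (hn : n ≠ 0)
    (h : x ^ n ≤ y ^ n * z) : x ≤ y * z ^ ((1 : ℝ) / n) := by
  refine le_of_pow_le_pow_left₀ hn (by positivity) ?_
  rwa [mul_pow, one_div, Real.rpow_inv_natCast_pow hz hn]

namespace IsCanonicalDecomp

variable {n : ℕ} {a : ℤ} {x : ℕ → ℤ}

lemma ne_zero (hx : IsCanonicalDecomp n a x) : a ≠ 0 :=
  hx.2.1 ▸ prod_ne_zero_iff.mpr fun i hi => pow_ne_zero i (hx.1 i hi)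

lemma factorization_natAbs_prod (hx : IsCanonicalDecomp n a x) (hn : 0 < n) {p : ℕ}
    (hp : p.Prime) :
    (∏ i ∈ Icc 1 n, x i).natAbs.factorization p =
      padicValInt p a / n + if padicValInt p a % n = 0 then 0 else 1 := by
  obtain ⟨htop, hlow⟩ := hx.2.2 p hp
  obtain ⟨m, rfl⟩ := Nat.exists_eq_add_one_of_ne_zero hn.ne'
  rw [show (∏ i ∈ Icc 1 (m + 1), x i).natAbs = ∏ i ∈ Icc 1 (m + 1), (x i).natAbs from
      map_prod Int.natAbsHom x _,
    Nat.factorization_prod_apply fun i hi => Int.natAbs_ne_zero.mpr (hx.1 i hi),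
    sum_congr rfl fun i _ => factorization_natAbs_eq_padicValInt (x i) hp,
    sum_Icc_succ_top (by omega), sum_congr rfl fun i hi => hlow i (by simpa using hi),
    sum_ite_eq', htop]
  have := Nat.mod_lt (padicValInt p a) (by omega : 0 < m + 1)
  simp only [mem_Icc]
  split_ifs <;> omega

lemma natAbs_prod_pow_dvd (hx : IsCanonicalDecomp n a x) (hn : 0 < n) :
    (∏ i ∈ Icc 1 n, x i).natAbs ^ n ∣ Int.radical' a ^ n * a.natAbs := by
  have hprod : ∏ i ∈ Icc 1 n, x i ≠ 0 := prod_ne_zero_iff.mpr hx.1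
  have ha : a.natAbs ≠ 0 := Int.natAbs_ne_zero.mpr hx.ne_zero
  rw [← Nat.factorization_prime_le_iff_dvd (pow_ne_zero n (Int.natAbs_ne_zero.mpr hprod))
    (mul_ne_zero (pow_ne_zero n (Int.radical'_pos a).ne') ha)]
  intro p hp
  have hmem : p ∈ a.natAbs.primeFactors ↔ padicValInt p a ≠ 0 := by
    rw [← factorization_natAbs_eq_padicValInt a hp, ← Finsupp.mem_support_iff,
      Nat.support_factorization]
  simp only [Nat.factorization_mul (pow_ne_zero n (Int.radical'_pos a).ne') ha,
    Nat.factorization_pow, Finsupp.add_apply, Finsupp.smul_apply, smul_eq_mul,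
    hx.factorization_natAbs_prod hn hp, Int.factorization_radical', hmem,
    factorization_natAbs_eq_padicValInt a hp]
  convert Nat.mul_div_add_ite_le n (padicValInt p a) using 1
  split_ifs <;> simp_all [add_comm]

end IsCanonicalDecomp

theorem prod_counting_bound_general (n : ℕ) (hn : 0 < n) (a b c : ℤ)
    (hab : Int.gcd a b = 1) (hbc : Int.gcd b c = 1) (hac : Int.gcd a c = 1)
    (x y z : ℕ → ℤ)
    (hx : IsCanonicalDecomp n a x) (hy : IsCanonicalDecomp n b y)
    (hz : IsCanonicalDecomp n c z) :
    ((((∏ i ∈ Finset.Icc 1 n, x i) * (∏ i ∈ Finset.Icc 1 n, y i) *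
        (∏ i ∈ Finset.Icc 1 n, z i)).natAbs : ℝ)) ≤
      (Int.radical' (a * b * c) : ℝ) *
        (((a * b * c).natAbs : ℝ)) ^ ((1 : ℝ) / n) := by
  have hrad : Int.radical' (a * b * c) = Int.radical' a * Int.radical' b * Int.radical' c := by
    rw [Int.radical'_mul, Int.radical'_mul (Int.isCoprime_iff_gcd_eq_one.mpr hab)]
    exact (Int.isCoprime_iff_gcd_eq_one.mpr hac).mul_left (Int.isCoprime_iff_gcd_eq_one.mpr hbc)
  have hdvd : ((∏ i ∈ Icc 1 n, x i) * (∏ i ∈ Icc 1 n, y i) * (∏ i ∈ Icc 1 n, z i)).natAbs ^ n ∣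
      Int.radical' (a * b * c) ^ n * (a * b * c).natAbs := by
    rw [hrad]
    simp only [Int.natAbs_mul, mul_pow]
    exact (mul_dvd_mul (mul_dvd_mul (hx.natAbs_prod_pow_dvd hn) (hy.natAbs_prod_pow_dvd hn))
      (hz.natAbs_prod_pow_dvd hn)).trans (dvd_of_eq (by ring))
  have hpos : 0 < Int.radical' (a * b * c) ^ n * (a * b * c).natAbs :=
    Nat.mul_pos (pow_pos (Int.radical'_pos _) n)
      (Int.natAbs_pos.mpr (mul_ne_zero (mul_ne_zero hx.ne_zero hy.ne_zero) hz.ne_zero))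
  refine le_mul_rpow_one_div_of_pow_le (by positivity) (by positivity) hn.ne' ?_
  exact_mod_cast Nat.le_of_dvd hpos hdvd

theorem prod_counting_bound (n : ℕ) (hn : 0 < n) (a b c : ℤ)
    (ha : a ≠ 0) (hb : b ≠ 0) (hc : c ≠ 0)
    (hab : Int.gcd a b = 1) (hbc : Int.gcd b c = 1) (hac : Int.gcd a c = 1)
    (hsum : a + b + c = 0)
    (x y z : ℕ → ℤ)
    (hx : IsCanonicalDecomp n a x) (hy : IsCanonicalDecomp n b y)
    (hz : IsCanonicalDecomp n c z) :
    ((((∏ i ∈ Finset.Icc 1 n, x i) * (∏ i ∈ Finset.Icc 1 n, y i) *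
        (∏ i ∈ Finset.Icc 1 n, z i)).natAbs : ℝ)) ≤
      (Int.radical' (a * b * c) : ℝ) *
        (((a * b * c).natAbs : ℝ)) ^ ((1 : ℝ) / n) :=
  prod_counting_bound_general n hn a b c hab hbc hac x y z hx hy hz
end
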